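/- arXiv:2103.00391 — 5 statements merged into one kernel-verified Lean document; each statement's English description precedes it below -/
import Mathlib

section
/- Let a_0, b_0 ≥ 0 and, for each j in a finite index set S, let a_j ∈ ℝ and b_j ≥ 0. Suppose the function f(θ) = ∏_{j∈S} (θ·a_j + b_j)/(θ·a_0 + b_0) is strictly positive for all θ ∈ [0,1]. Then θ ↦ log(f(θ)) is quasiconcave on [0,1]; i.e., for all θ1, θ2 ∈ [0,1] and t ∈ [0,1], log f(t·θ1 + (1−t)·θ2) ≥ min(log f(θ1), log f(θ2)). -/
/-!
Write `N_j θ = θ a_j + b_j` and `D θ = θ a₀ + b₀`. Since `f > 0` on `[0, 1]`, neither `D` nor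
any `N_j` vanishes there, so each of these affine functions keeps a strict sign on `[0, 1]`.
A linear-fractional map sends a convex combination to a convex combination with new weights:
for `z = t x + (1 - t) y`, `N_j z / D z = w · N_j x / D x + (1 - w) · N_j y / D y` with
`w = t D x / D z ∈ [0, 1]`, the same `w` for every `j`. Concavity of `log` on each factor and
summation give `log f z ≥ w log f x + (1 - w) log f y ≥ min (log f x) (log f y)`.
-/

open Set Real

lemma mul_pos_of_forall_mem_uIcc_ne_zero {a b x y p q : ℝ} (h : ∀ θ ∈ uIcc x y, θ * a + b ≠ 0)
    (hp : p ∈ uIcc x y) (hq : q ∈ uIcc x y) : 0 < (p * a + b) * (q * a + b) := by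
  by_contra! hle
  have h0 : (0 : ℝ) ∈ uIcc (p * a + b) (q * a + b) := by
    rw [Set.mem_uIcc]
    rcases mul_nonpos_iff.1 hle with ⟨hp, hq⟩ | ⟨hp, hq⟩
    exacts [Or.inr ⟨hq, hp⟩, Or.inl ⟨hp, hq⟩]
  obtain ⟨θ, hθ, hzero⟩ :=
    intermediate_value_uIcc (by fun_prop : ContinuousOn (fun θ ↦ θ * a + b) (uIcc p q)) h0
  exact h θ (uIcc_subset_uIcc hp hq hθ) hzero

lemma combo_mem_uIcc {x y t : ℝ} (ht : t ∈ Icc (0 : ℝ) 1) : t * x + (1 - t) * y ∈ uIcc x y :=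
  convex_uIcc x y left_mem_uIcc right_mem_uIcc ht.1 (sub_nonneg.2 ht.2) (by ring)

lemma combo_mul_log_le_log_combo_of_mul_pos {u v s : ℝ} (huv : 0 < u * v)
    (hs : s ∈ Icc (0 : ℝ) 1) :
    s * log u + (1 - s) * log v ≤ log (s * u + (1 - s) * v) := by
  have hconc := strictConcaveOn_log_Ioi.concaveOn.2 (x := |u|) (y := |v|)
    (abs_pos.2 (left_ne_zero_of_mul huv.ne'))
    (abs_pos.2 (right_ne_zero_of_mul huv.ne')) hs.1 (sub_nonneg.2 hs.2) (by ring)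
  simp only [smul_eq_mul, log_abs] at hconc
  rcases pos_and_pos_or_neg_and_neg_of_mul_pos huv with ⟨hu, hv⟩ | ⟨hu, hv⟩
  · rwa [abs_of_pos hu, abs_of_pos hv] at hconc
  · rwa [abs_of_neg hu, abs_of_neg hv, mul_neg, mul_neg, ← neg_add,
      log_neg_eq_log] at hconc

noncomputable def linFracWeight (a₀ b₀ x y t : ℝ) : ℝ :=
  t * (x * a₀ + b₀) / ((t * x + (1 - t) * y) * a₀ + b₀)

section LinFrac

variable {a b a₀ b₀ x y t : ℝ}

lemma one_sub_linFracWeight (hz : (t * x + (1 - t) * y) * a₀ + b₀ ≠ 0) :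
    1 - linFracWeight a₀ b₀ x y t =
      (1 - t) * (y * a₀ + b₀) / ((t * x + (1 - t) * y) * a₀ + b₀) := by
  rw [eq_div_iff hz, linFracWeight, sub_mul, div_mul_cancel₀ _ hz]
  ring

lemma linFracWeight_mem_Icc (hD : ∀ θ ∈ uIcc x y, θ * a₀ + b₀ ≠ 0) (ht : t ∈ Icc (0 : ℝ) 1) :
    linFracWeight a₀ b₀ x y t ∈ Icc (0 : ℝ) 1 := by
  have hz := combo_mem_uIcc (x := x) (y := y) ht
  have hratio {p : ℝ} (hp : p ∈ uIcc x y) :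
      0 < (p * a₀ + b₀) / ((t * x + (1 - t) * y) * a₀ + b₀) :=
    div_pos_iff.2 (pos_and_pos_or_neg_and_neg_of_mul_pos
      (mul_pos_of_forall_mem_uIcc_ne_zero hD hp hz))
  rw [mem_Icc, ← sub_nonneg (a := (1 : ℝ)), one_sub_linFracWeight (hD _ hz), linFracWeight,
    mul_div_assoc, mul_div_assoc]
  exact ⟨mul_nonneg ht.1 (hratio left_mem_uIcc).le,
    mul_nonneg (sub_nonneg.2 ht.2) (hratio right_mem_uIcc).le⟩

lemma div_affine_combo_eq (hx : x * a₀ + b₀ ≠ 0) (hy : y * a₀ + b₀ ≠ 0)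
    (hz : (t * x + (1 - t) * y) * a₀ + b₀ ≠ 0) :
    ((t * x + (1 - t) * y) * a + b) / ((t * x + (1 - t) * y) * a₀ + b₀) =
      linFracWeight a₀ b₀ x y t * ((x * a + b) / (x * a₀ + b₀)) +
        (1 - linFracWeight a₀ b₀ x y t) * ((y * a + b) / (y * a₀ + b₀)) := by
  rw [one_sub_linFracWeight hz, linFracWeight]
  field_simp
  ring

lemma combo_log_div_affine_le (hN : ∀ θ ∈ uIcc x y, θ * a + b ≠ 0)
    (hD : ∀ θ ∈ uIcc x y, θ * a₀ + b₀ ≠ 0) (ht : t ∈ Icc (0 : ℝ) 1) :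
    linFracWeight a₀ b₀ x y t * log ((x * a + b) / (x * a₀ + b₀)) +
        (1 - linFracWeight a₀ b₀ x y t) * log ((y * a + b) / (y * a₀ + b₀)) ≤
      log (((t * x + (1 - t) * y) * a + b) / ((t * x + (1 - t) * y) * a₀ + b₀)) := by
  rw [div_affine_combo_eq (hD _ left_mem_uIcc) (hD _ right_mem_uIcc) (hD _ (combo_mem_uIcc ht))]
  refine combo_mul_log_le_log_combo_of_mul_pos ?_ (linFracWeight_mem_Icc hD ht)
  rw [div_mul_div_comm]
  exact div_pos (mul_pos_of_forall_mem_uIcc_ne_zero hN left_mem_uIcc right_mem_uIcc)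
    (mul_pos_of_forall_mem_uIcc_ne_zero hD left_mem_uIcc right_mem_uIcc)

end LinFrac

theorem stmt_0_general {ι : Type*} (S : Finset ι) (a b : ι → ℝ) (a0 b0 : ℝ)
    (f : ℝ → ℝ)
    (hf : ∀ θ : ℝ, f θ = ∏ j ∈ S, (θ * a j + b j) / (θ * a0 + b0))
    (hpos : ∀ θ ∈ Set.Icc (0:ℝ) 1, 0 < f θ) :
    ∀ θ1 ∈ Set.Icc (0:ℝ) 1, ∀ θ2 ∈ Set.Icc (0:ℝ) 1, ∀ t ∈ Set.Icc (0:ℝ) 1,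
      Real.log (f (t * θ1 + (1 - t) * θ2)) ≥
        min (Real.log (f θ1)) (Real.log (f θ2)) := by
  intro θ1 h1 θ2 h2 t ht
  rcases S.eq_empty_or_nonempty with rfl | ⟨j₀, hj₀⟩
  · simp [hf]
  have hfactor : ∀ θ ∈ uIcc θ1 θ2, ∀ j ∈ S, θ * a j + b j ≠ 0 ∧ θ * a0 + b0 ≠ 0 := by
    intro θ hθ j hj
    have hne := (hpos θ (uIcc_subset_Icc h1 h2 hθ)).ne'
    rw [hf, Finset.prod_ne_zero_iff] at hne
    exact div_ne_zero_iff.1 (hne j hj)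
  have hlog {θ : ℝ} (hθ : θ ∈ uIcc θ1 θ2) :
      log (f θ) = ∑ j ∈ S, log ((θ * a j + b j) / (θ * a0 + b0)) := by
    rw [hf, log_prod]
    exact fun j hj ↦ div_ne_zero (hfactor θ hθ j hj).1 (hfactor θ hθ j hj).2
  have hw := linFracWeight_mem_Icc (fun θ hθ ↦ (hfactor θ hθ j₀ hj₀).2) ht
  calc min (log (f θ1)) (log (f θ2))
      ≤ linFracWeight a0 b0 θ1 θ2 t * log (f θ1) +
          (1 - linFracWeight a0 b0 θ1 θ2 t) * log (f θ2) :=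
        Convex.min_le_combo _ _ hw.1 (sub_nonneg.2 hw.2) (add_sub_cancel _ _)
    _ ≤ log (f (t * θ1 + (1 - t) * θ2)) := by
        rw [hlog left_mem_uIcc, hlog right_mem_uIcc, hlog (combo_mem_uIcc ht), Finset.mul_sum,
          Finset.mul_sum, ← Finset.sum_add_distrib]
        exact Finset.sum_le_sum fun j hj ↦ combo_log_div_affine_le
          (fun θ hθ ↦ (hfactor θ hθ j hj).1) (fun θ hθ ↦ (hfactor θ hθ j hj).2) ht

/-- quasiconcavity of the log of the ratio-product function on [0,1]. -/
theorem stmt_0 {ι : Type*} (S : Finset ι) (a b : ι → ℝ) (a0 b0 : ℝ)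
    (ha0 : 0 ≤ a0) (hb0 : 0 ≤ b0) (hb : ∀ j ∈ S, 0 ≤ b j)
    (f : ℝ → ℝ)
    (hf : ∀ θ : ℝ, f θ = ∏ j ∈ S, (θ * a j + b j) / (θ * a0 + b0))
    (hpos : ∀ θ ∈ Set.Icc (0:ℝ) 1, 0 < f θ) :
    ∀ θ1 ∈ Set.Icc (0:ℝ) 1, ∀ θ2 ∈ Set.Icc (0:ℝ) 1, ∀ t ∈ Set.Icc (0:ℝ) 1,
      Real.log (f (t * θ1 + (1 - t) * θ2)) ≥
        min (Real.log (f θ1)) (Real.log (f θ2)) :=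
  stmt_0_general S a b a0 b0 f hf hpos
end

section
/- Let r_1, …, r_n be nonnegative reals and let e_k denote the k-th elementary symmetric polynomial in r_1, …, r_n (with e_0 = 1). Then for every integer y with 1 ≤ y ≤ n−1, Newton's inequality holds: e_y² · y · (n − y) ≥ e_{y+1} · e_{y−1} · (n − y + 1) · (y + 1). -/
/-!
By Rolle's theorem the derivative of a real-rooted polynomial of degree `n` is again real-rooted,
and the roots of `(∏ (X - rᵢ))'` have `k`-th elementary symmetric function `(n - k) / n · eₖ`. This rescaling
turns Newton's inequality for the `n - 1` roots of the derivative into Newton's inequality for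
`r₁, …, rₙ`, which reduces everything to the top case `k = n - 1`. There one adds a root `a` at a
time: up to positive factors, the new inequality is the old one multiplied by `a²` plus the
square `(n eₙ - a eₙ₋₁)²`.
-/

open Polynomial

namespace Multiset

theorem esymm_cons_succ {R : Type*} [CommSemiring R] (a : R) (s : Multiset R) (k : ℕ) :
    (a ::ₘ s).esymm (k + 1) = s.esymm (k + 1) + a * s.esymm k := by
  simp [esymm, powersetCard_cons, sum_map_mul_left]

theorem esymm_eq_zero_of_card_lt {R : Type*} [CommSemiring R] {s : Multiset R} {k : ℕ}
    (h : card s < k) : s.esymm k = 0 := by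
  simp [esymm, powersetCard_eq_empty _ h]

theorem newton_inequality_of_card_eq (s : Multiset ℝ) (k : ℕ) (hs : card s = k + 2) :
    s.esymm (k + 2) * s.esymm k * (2 * (k + 2)) ≤ s.esymm (k + 1) ^ 2 * (k + 1) := by
  induction k generalizing s with
  | zero =>
    obtain ⟨a, b, rfl⟩ := card_eq_two.1 hs
    have hesymm_zero : (a ::ₘ {b}).esymm 0 = 1 := by simp [esymm]
    rw [insert_eq_cons, zero_add, esymm_pair_two, hesymm_zero, zero_add, esymm_pair_one]
    nlinarith [sq_nonneg (a - b)]
  | succ k ih =>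
    obtain ⟨a, t, rfl, ht⟩ := card_eq_succ_iff.1 hs
    have hzero : t.esymm (k + 3) = 0 := esymm_eq_zero_of_card_lt (by omega)
    simp only [esymm_cons_succ, hzero]
    push_cast
    nlinarith [mul_le_mul_of_nonneg_left (ih t ht) (sq_nonneg a),
      sq_nonneg ((k + 2) * t.esymm (k + 2) - a * t.esymm (k + 1))]

theorem natDegree_derivative_prod_X_sub_C {R : Type*} [CommRing R] [Nontrivial R]
    [IsAddTorsionFree R] (s : Multiset R) :
    (derivative (s.map fun a => X - C a).prod).natDegree = card s - 1 := by
  rw [natDegree_derivative, natDegree_multiset_prod_X_sub_C_eq_card]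

noncomputable def derivativeRoots (s : Multiset ℝ) : Multiset ℝ :=
  (derivative (s.map fun a => X - C a).prod).roots

theorem card_derivativeRoots (s : Multiset ℝ) : card s.derivativeRoots = card s - 1 := by
  have hrolle := card_roots_le_derivative (s.map fun a => X - C a).prod
  have hdeg := card_roots' (derivative (s.map fun a => X - C a).prod)
  rw [roots_multiset_prod_X_sub_C] at hrolle
  rw [natDegree_derivative_prod_X_sub_C] at hdeg
  rw [derivativeRoots]
  omega

theorem card_mul_esymm_derivativeRoots (s : Multiset ℝ) {k : ℕ} (hk : k < card s) :
    (card s : ℝ) * s.derivativeRoots.esymm k = (card s - k) * s.esymm k := by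
  set P := (s.map fun a => X - C a).prod
  have hsplit : card (derivative P).roots = (derivative P).natDegree := by
    rw [← derivativeRoots, card_derivativeRoots, natDegree_derivative_prod_X_sub_C]
  -- the coefficient of `X ^ (card s - 1 - k)` in `P'`, by Vieta on the roots of `P'` ...
  have hvieta := coeff_eq_esymm_roots_of_card hsplit (k := card s - 1 - k) (by
    rw [natDegree_derivative_prod_X_sub_C]; omega)
  have hlead : (derivative P).leadingCoeff = card s := by
    rw [leadingCoeff, natDegree_derivative_prod_X_sub_C, coeff_derivative,
      Nat.sub_add_cancel (by omega), prod_X_sub_C_coeff s le_rfl]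
    simp [esymm, Nat.cast_sub (by omega : 1 ≤ card s)]
  have hsucc : card s - 1 - k + 1 = card s - k := by omega
  have hcomp : card s - 1 - (card s - 1 - k) = k := by omega
  -- ... and by differentiating Vieta's formula for `P`
  rw [coeff_derivative, hsucc, prod_X_sub_C_coeff s (by omega), hlead,
    natDegree_derivative_prod_X_sub_C, hcomp, Nat.sub_sub_self hk.le, ← derivativeRoots,
    Nat.cast_sub (by omega : k ≤ card s - 1), Nat.cast_sub (by omega : 1 ≤ card s),
    Nat.cast_one] at hvieta
  refine mul_left_cancel₀ (pow_ne_zero k (by norm_num : (-1 : ℝ) ≠ 0)) ?_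
  linear_combination -hvieta

theorem newton_inequality (s : Multiset ℝ) {k : ℕ} (hk : k + 2 ≤ card s) :
    s.esymm (k + 2) * s.esymm k * ((card s - k) * (k + 2)) ≤
      s.esymm (k + 1) ^ 2 * ((k + 1) * (card s - k - 1)) := by
  obtain ⟨m, hm⟩ := Nat.exists_eq_add_of_le hk
  induction m generalizing s with
  | zero =>
    have hN : (card s : ℝ) = k + 2 := by exact_mod_cast hm
    rw [hN]
    linarith [newton_inequality_of_card_eq s k hm]
  | succ m ih =>
    set N : ℝ := (card s : ℝ)
    have hN : N = k + 2 + m + 1 := by simp only [N, hm]; push_cast; ring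
    have ht : card s.derivativeRoots = k + 2 + m := by rw [card_derivativeRoots]; omega
    have hNt : (card s.derivativeRoots : ℝ) = N - 1 := by rw [ht, hN]; push_cast; ring
    have ih' := ih s.derivativeRoots (by omega) ht
    rw [hNt] at ih'
    have h0 := card_mul_esymm_derivativeRoots s (k := k) (by omega)
    have h1 := card_mul_esymm_derivativeRoots s (k := k + 1) (by omega)
    have h2 := card_mul_esymm_derivativeRoots s (k := k + 2) (by omega)
    push_cast at h1 h2
    have hpos : 0 < (N - k - 1) * (N - k - 2) := by rw [hN]; ring_nf; positivity
    refine le_of_mul_le_mul_left ?_ hpos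
    calc (N - k - 1) * (N - k - 2) * (s.esymm (k + 2) * s.esymm k * ((N - k) * (k + 2)))
        = (N * s.derivativeRoots.esymm (k + 2)) * (N * s.derivativeRoots.esymm k)
            * ((N - 1 - k) * (k + 2)) := by rw [h0, h2]; ring
      _ ≤ (N * s.derivativeRoots.esymm (k + 1)) ^ 2 * ((k + 1) * (N - 1 - k - 1)) := by
          linarith [mul_le_mul_of_nonneg_left ih' (sq_nonneg N)]
      _ = (N - k - 1) * (N - k - 2) * (s.esymm (k + 1) ^ 2 * ((k + 1) * (N - k - 1))) := by
          rw [h1]; ring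

end Multiset

theorem stmt_1_general (n : ℕ) (r : Fin n → ℝ)
    (e : ℕ → ℝ)
    (he : ∀ k, e k = ∑ t ∈ (Finset.univ : Finset (Fin n)).powersetCard k, ∏ i ∈ t, r i)
    (y : ℕ) (hy1 : 1 ≤ y) (hyn : y < n) :
    e y ^ 2 * y * ((n : ℝ) - y) ≥
      e (y + 1) * e (y - 1) * ((n : ℝ) - y + 1) * ((y : ℝ) + 1) := by
  obtain ⟨k, rfl⟩ := Nat.exists_eq_add_of_le' hy1
  have hcard : Multiset.card (Finset.univ.val.map r) = n := by simp
  have hnewton := (Finset.univ.val.map r).newton_inequality (k := k) (by omega)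
  simp only [hcard, Finset.esymm_map_val] at hnewton
  simp only [he, Nat.add_sub_cancel]
  push_cast
  linarith

/-- Newton's inequality for elementary symmetric polynomials of
nonnegative reals. -/
theorem stmt_1 (n : ℕ) (r : Fin n → ℝ) (hr : ∀ i, 0 ≤ r i)
    (e : ℕ → ℝ)
    (he : ∀ k, e k = ∑ t ∈ (Finset.univ : Finset (Fin n)).powersetCard k, ∏ i ∈ t, r i)
    (y : ℕ) (hy1 : 1 ≤ y) (hyn : y < n) :
    e y ^ 2 * y * ((n : ℝ) - y) ≥
      e (y + 1) * e (y - 1) * ((n : ℝ) - y + 1) * ((y : ℝ) + 1) :=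
  stmt_1_general n r e he y hy1 hyn
end

section
/- Single-resource Shortest Job First minimizes the product of completion times: with one unit-capacity resource and work amounts w_1 ≤ w_2 ≤ … ≤ w_n (> 0), the serial allocation that processes agents in increasing order of work yields completion times T_i = Σ_{k=1}^{i} w_k, and for any feasible allocation with completion times t_1, …, t_n, ∏_i t_i ≥ ∏_i T_i. -/
/-!
Sort the agents by completion time, `T (σ 0) ≤ T (σ 1) ≤ …`. By time `T (σ i)` the `i + 1`
agents `σ 0, …, σ i` have all finished, and a unit-capacity resource delivers at most
`T (σ i)` units of work by then, so `T (σ i)` bounds their total work, which in turn is at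
least the sum of the `i + 1` smallest work amounts. Multiply these factorwise bounds.
-/

open MeasureTheory intervalIntegral

namespace Finset

/-- Exchange argument: `Iic i` and `S` differ by sets of equal size, and `w` is at most `w i`
on the first difference and at least `w i` on the second. -/
lemma sum_Iic_le_sum_of_card_eq {ι M : Type*} [LinearOrder ι] [LocallyFiniteOrderBot ι]
    [AddCommMonoid M] [PartialOrder M] [IsOrderedAddMonoid M] {w : ι → M} (hw : Monotone w)
    {i : ι} {S : Finset ι} (hS : #S = #(Iic i)) :
    ∑ k ∈ Iic i, w k ≤ ∑ k ∈ S, w k :=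
  calc ∑ k ∈ Iic i, w k
      ≤ ∑ k ∈ Iic i ∩ S, w k + #(Iic i \ S) • w i := by
        rw [← sum_inter_add_sum_sdiff (Iic i) S]
        gcongr
        exact sum_le_card_nsmul _ _ _ fun k hk => hw (mem_Iic.1 (mem_sdiff.1 hk).1)
    _ = ∑ k ∈ S ∩ Iic i, w k + #(S \ Iic i) • w i := by
        rw [inter_comm, card_sdiff_comm hS.symm]
    _ ≤ ∑ k ∈ S, w k := by
        rw [← sum_inter_add_sum_sdiff S (Iic i)]
        gcongr
        refine card_nsmul_le_sum _ _ _ fun k hk => hw ?_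
        exact (not_le.1 fun hki => (mem_sdiff.1 hk).2 (mem_Iic.2 hki)).le

end Finset

lemma sum_intervalIntegral_le_sub {ι : Type*} {S : Finset ι} {A : ι → ℝ → ℝ} {a b : ℝ}
    (hab : a ≤ b) (hInt : ∀ j ∈ S, IntervalIntegrable (A j) volume a b)
    (hcap : ∀ t, ∑ j ∈ S, A j t ≤ 1) :
    ∑ j ∈ S, ∫ t in a..b, A j t ≤ b - a :=
  calc ∑ j ∈ S, ∫ t in a..b, A j t
      = ∫ t in a..b, ∑ j ∈ S, A j t := (integral_finsetSum hInt).symm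
    _ ≤ ∫ _ in a..b, (1 : ℝ) :=
        integral_mono_on hab (by simpa only [Finset.sum_fn] using IntervalIntegrable.sum S hInt) intervalIntegrable_const
          fun t _ => hcap t
    _ = b - a := by simp

lemma sum_work_le_of_completion_le {ι : Type*} [Fintype ι] {A : ι → ℝ → ℝ}
    (hA0 : ∀ i t, 0 ≤ A i t) (hsum : ∀ t, ∑ i, A i t ≤ 1)
    (hInt : ∀ i, ∀ x y : ℝ, IntervalIntegrable (A i) volume x y)
    {T : ι → ℝ} (hT0 : ∀ i, 0 ≤ T i) {S : Finset ι} {M : ℝ} (hM : 0 ≤ M)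
    (hTM : ∀ j ∈ S, T j ≤ M) :
    ∑ j ∈ S, ∫ t in (0 : ℝ)..T j, A j t ≤ M := by
  calc ∑ j ∈ S, ∫ t in (0 : ℝ)..T j, A j t
      ≤ ∑ j ∈ S, ∫ t in (0 : ℝ)..M, A j t := by
        refine Finset.sum_le_sum fun j hj => ?_
        exact integral_mono_interval le_rfl (hT0 j) (hTM j hj)
          (Filter.Eventually.of_forall fun t => hA0 j t) (hInt j 0 M)
    _ ≤ M - 0 := by
        refine sum_intervalIntegral_le_sub hM (fun j _ => hInt j 0 M) fun t => ?_
        exact (Finset.sum_le_univ_sum_of_nonneg fun j => hA0 j t).trans (hsum t)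
    _ = M := sub_zero M

/-- for a single unit-capacity resource with work amounts sorted
increasingly, SJF (completion times the partial sums of work) minimizes the
product of completion times over all feasible allocations. -/
theorem stmt_6 (n : ℕ) (w : Fin n → ℝ) (hw : ∀ i, 0 < w i) (hmono : Monotone w)
    (A : Fin n → ℝ → ℝ)
    (hA0 : ∀ i t, 0 ≤ A i t)
    (hsum : ∀ t : ℝ, ∑ i, A i t ≤ 1)
    (T : Fin n → ℝ) (hT0 : ∀ i, 0 ≤ T i)
    (hInt : ∀ i, ∀ x y : ℝ, IntervalIntegrable (A i) volume x y)
    (hdone : ∀ i, ∫ s in (0:ℝ)..(T i), A i s = w i) :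
    ∏ i, (∑ k ∈ Finset.Iic i, w k) ≤ ∏ i, T i := by
  set σ := Tuple.sort T
  rw [← Equiv.prod_comp σ T]
  refine Finset.prod_le_prod (fun i _ => Finset.sum_nonneg fun k _ => (hw k).le) fun i _ => ?_
  have hcard : ((Finset.Iic i).map σ.toEmbedding).card = (Finset.Iic i).card :=
    Finset.card_map _
  calc ∑ k ∈ Finset.Iic i, w k
      ≤ ∑ j ∈ (Finset.Iic i).map σ.toEmbedding, w j :=
        Finset.sum_Iic_le_sum_of_card_eq hmono hcard
    _ = ∑ j ∈ (Finset.Iic i).map σ.toEmbedding, ∫ t in (0 : ℝ)..T j, A j t :=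
        Finset.sum_congr rfl fun j _ => (hdone j).symm
    _ ≤ T (σ i) := by
        refine sum_work_le_of_completion_le hA0 hsum hInt hT0 (hT0 _) fun j hj => ?_
        obtain ⟨k, hk, rfl⟩ := Finset.mem_map.1 hj
        exact Tuple.monotone_sort T (Finset.mem_Iic.1 hk)
end

section
/- SJF is envy-free in expectation for a single resource: with one unit-capacity resource and work amounts w_1 ≤ … ≤ w_n (> 0), under the serial schedule in increasing order of work with random tie-breaking among agents of equal work, for any two agents i, j the expected time at which agent i would complete work w_i using agent j's allocation is at least agent i's own expected completion time. -/
/-!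
Agents of different work are served in increasing order of work, so if `w i < w j` then `i`
finishes before `j` starts and, the amounts of work being nonnegative, `i` can only lose by
taking `j`'s interval. Agents of equal work are exchanged by the transposition `swap i j`,
which preserves the set of SJF orders and turns the completion time of `i` into that of `j`,
so their expected completion times coincide.
-/

open scoped BigOperators ENNReal

open Finset

namespace SJF

section

variable {α β : Type*} [Fintype α] [DecidableEq α] [LinearOrder α]

open Classical in
/-- `π` sends each agent to its position in the serial schedule. -/
noncomputable def sjfOrders [Preorder β] (w : α → β) : Finset (Equiv.Perm α) :=
  univ.filter fun π => ∀ a b, π a < π b → w a ≤ w b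

lemma mem_sjfOrders [Preorder β] {w : α → β} {π : Equiv.Perm α} :
    π ∈ sjfOrders w ↔ ∀ a b, π a < π b → w a ≤ w b := by
  simp [sjfOrders]

def completionTime [AddCommMonoid β] (w : α → β) (π : Equiv.Perm α) (i : α) : β :=
  ∑ k ∈ univ.filter (fun k => π k ≤ π i), w k

lemma apply_lt_apply_of_mem_sjfOrders [Preorder β] {w : α → β} {π : Equiv.Perm α}
    (hπ : π ∈ sjfOrders w) {i j : α} (hij : w i < w j) : π i < π j := by
  refine lt_of_not_ge fun hji => hji.lt_or_eq.elim (fun h => ?_) fun h => ?_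
  · exact (mem_sjfOrders.1 hπ j i h).not_gt hij
  · exact hij.ne (congrArg w (π.injective h)).symm

lemma completionTime_add_le_of_lt [AddCommMonoid β] [PartialOrder β] [IsOrderedAddMonoid β]
    {w : α → β} (hw : ∀ k, 0 ≤ w k) {π : Equiv.Perm α} {i j : α} (hij : π i < π j) :
    completionTime w π i + w j ≤ completionTime w π j := by
  have hsub : insert j (univ.filter fun k => π k ≤ π i) ⊆ univ.filter fun k => π k ≤ π j := by
    intro k hk
    simp only [mem_insert, mem_filter, mem_univ, true_and] at hk ⊢
    rcases hk with rfl | hk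
    exacts [le_rfl, hk.trans hij.le]
  have hj : j ∉ univ.filter fun k => π k ≤ π i := by simpa using hij
  calc completionTime w π i + w j
      = ∑ k ∈ insert j (univ.filter fun k => π k ≤ π i), w k := by
        rw [sum_insert hj, add_comm, completionTime]
    _ ≤ completionTime w π j := sum_le_sum_of_subset_of_nonneg hsub fun k _ _ => hw k

lemma swap_trans_mem_sjfOrders [Preorder β] {w : α → β} {i j : α} (hij : w i = w j)
    {π : Equiv.Perm α} (hπ : π ∈ sjfOrders w) : (Equiv.swap i j).trans π ∈ sjfOrders w :=
  mem_sjfOrders.2 fun a b hab => by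
    simpa only [Equiv.apply_swap_eq_self hij] using mem_sjfOrders.1 hπ _ _ hab

lemma completionTime_swap_trans [AddCommMonoid β] {w : α → β} {i j : α} (hij : w i = w j)
    (π : Equiv.Perm α) :
    completionTime w ((Equiv.swap i j).trans π) j = completionTime w π i :=
  sum_equiv (Equiv.swap i j) (fun k => by simp) fun k _ => (Equiv.apply_swap_eq_self hij k).symm

lemma sum_sjfOrders_completionTime_eq_of_weight_eq {M : Type*} [AddCommMonoid M]
    [AddCommMonoid β] [Preorder β] {w : α → β} {i j : α} (hij : w i = w j) (f : β → M) :
    ∑ π ∈ sjfOrders w, f (completionTime w π i) = ∑ π ∈ sjfOrders w, f (completionTime w π j) :=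
  sum_nbij' ((Equiv.swap i j).trans ·) ((Equiv.swap i j).trans ·)
    (fun _ => swap_trans_mem_sjfOrders hij) (fun _ => swap_trans_mem_sjfOrders hij)
    (fun π _ => by ext; simp) (fun π _ => by ext; simp)
    fun π _ => by rw [completionTime_swap_trans hij]

end

lemma sjfOrders_nonempty {n : ℕ} {β : Type*} [LinearOrder β] (w : Fin n → β) :
    (sjfOrders w).Nonempty := by
  refine ⟨(Tuple.sort w).symm, mem_sjfOrders.2 fun a b hab => ?_⟩
  simpa using Tuple.monotone_sort w hab.le

end SJF

open SJF in
theorem stmt_8_general (n : ℕ) (w : Fin n → ℝ) (hw : ∀ i, 0 < w i) :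
    ∀ i j : Fin n,
      ∑ π ∈ Finset.univ.filter
          (fun π : Equiv.Perm (Fin n) => ∀ a b : Fin n, π a < π b → w a ≤ w b),
        ENNReal.ofReal (∑ k ∈ Finset.univ.filter (fun k => π k ≤ π i), w k)
      ≤
      ∑ π ∈ Finset.univ.filter
          (fun π : Equiv.Perm (Fin n) => ∀ a b : Fin n, π a < π b → w a ≤ w b),
        (if w i ≤ w j then
          ENNReal.ofReal
            ((∑ k ∈ Finset.univ.filter (fun k => π k ≤ π j), w k) - w j + w i)
        else ⊤) := by
  intro i j
  have hS : univ.filter (fun π : Equiv.Perm (Fin n) => ∀ a b, π a < π b → w a ≤ w b) =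
      sjfOrders w := by
    ext; simp [mem_sjfOrders]
  rw [hS]
  change ∑ π ∈ sjfOrders w, ENNReal.ofReal (completionTime w π i) ≤
    ∑ π ∈ sjfOrders w, if w i ≤ w j then
      ENNReal.ofReal (completionTime w π j - w j + w i) else ⊤
  rcases lt_trichotomy (w i) (w j) with hlt | heq | hgt
  · simp only [if_pos hlt.le]
    refine sum_le_sum fun π hπ => ENNReal.ofReal_le_ofReal ?_
    have := completionTime_add_le_of_lt (fun k => (hw k).le)
      (apply_lt_apply_of_mem_sjfOrders hπ hlt)
    linarith [hw i]
  · simp only [heq, le_refl, if_true, sub_add_cancel]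
    exact (sum_sjfOrders_completionTime_eq_of_weight_eq heq ENNReal.ofReal).le
  · obtain ⟨π, hπ⟩ := sjfOrders_nonempty w
    simp only [if_neg hgt.not_ge]
    exact le_top.trans_eq (WithTop.sum_eq_top.2 ⟨π, hπ, rfl⟩).symm

/-- SJF with uniform random tie-breaking is envy-free in
expectation for a single resource.  Expectations over the uniformly random
valid SJF orders are compared via sums over all such orders; the cost of agent
i using agent j's allocation is the end of j's service interval shifted to the
moment work w i is done if w i ≤ w j, and +∞ otherwise. -/
theorem stmt_8 (n : ℕ) (w : Fin n → ℝ) (hw : ∀ i, 0 < w i) (hmono : Monotone w) :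
    ∀ i j : Fin n,
      ∑ π ∈ Finset.univ.filter
          (fun π : Equiv.Perm (Fin n) => ∀ a b : Fin n, π a < π b → w a ≤ w b),
        ENNReal.ofReal (∑ k ∈ Finset.univ.filter (fun k => π k ≤ π i), w k)
      ≤
      ∑ π ∈ Finset.univ.filter
          (fun π : Equiv.Perm (Fin n) => ∀ a b : Fin n, π a < π b → w a ≤ w b),
        (if w i ≤ w j then
          ENNReal.ofReal
            ((∑ k ∈ Finset.univ.filter (fun k => π k ≤ π j), w k) - w j + w i)
        else ⊤) :=
  stmt_8_general n w hw
end

section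
/- LCP violates strategy-proofness, arithmetic verification: For d_1 = (1/2, 1), d_2 = (1, 1/6) with unit work each, the minimizer of (1/x)(1 − y/x + 1/x) subject to x/2 + y ≤ 1 and x + y/6 ≤ 1 (x, y > 0) is x = 10/11, y = 6/11, giving agent 1 cost 11/10; whereas for the misreported demand d_1' = (2/3, 1), the minimizer of the same objective subject to 2x/3 + y ≤ 1 and x + y/6 ≤ 1 is x = 15/16, y = 3/8, and with this allocation agent 1's true completion time is 16/15 < 11/10. -/
/-!
The objective `(1/x)(1 - y/x + 1/x) = (x - y + 1)/x²` decreases in `y`, so it is bounded below by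
substituting the largest `y` each constraint allows. Agent 1's constraint `a x + y ≤ 1` gives the
bound `(1 + a)/x`, decreasing in `x`; agent 2's constraint `x + y/6 ≤ 1` gives `(7x - 5)/x²`,
increasing on `(0, 1]`. Both bounds agree at the point where both constraints are tight, which is
therefore the minimizer: `(10/11, 6/11)` for `a = 1/2` and `(15/16, 3/8)` for `a = 2/3`.
-/

noncomputable section

namespace LCP

def objective (x y : ℝ) : ℝ := (1 / x) * (1 - y / x + 1 / x)

theorem objective_eq {x : ℝ} (hx : x ≠ 0) (y : ℝ) : objective x y = (x - y + 1) / x ^ 2 := by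
  unfold objective
  field_simp

theorem one_add_div_le_objective {a x y : ℝ} (hx : 0 < x) (h : a * x + y ≤ 1) :
    (1 + a) / x ≤ objective x y := by
  rw [objective_eq hx.ne', div_le_div_iff₀ hx (by positivity)]
  nlinarith

theorem seven_mul_sub_five_div_sq_le_objective {x y : ℝ} (hx : 0 < x) (h : x + y / 6 ≤ 1) :
    (7 * x - 5) / x ^ 2 ≤ objective x y := by
  rw [objective_eq hx.ne']
  gcongr
  linarith

theorem seven_mul_sub_five_div_sq_le {x₀ x : ℝ} (hx₀ : 0 < x₀) (hx₀x : x₀ ≤ x) (hx : x ≤ 1) :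
    (7 * x₀ - 5) / x₀ ^ 2 ≤ (7 * x - 5) / x ^ 2 := by
  rw [div_le_div_iff₀ (by positivity) (by nlinarith)]
  -- the difference is `(x - x₀) (5 (x + x₀) - 7 x x₀)` and `x x₀ ≤ (x + x₀)/2` on `(0, 1]`
  nlinarith [mul_nonneg (sub_nonneg.2 hx₀x) (sub_nonneg.2 hx), mul_pos hx₀ hx₀,
    mul_nonneg (sub_nonneg.2 hx₀x) (mul_nonneg hx₀.le (sub_nonneg.2 hx))]

theorem objective_le_of_tight {a x₀ y₀ x y : ℝ} (ha : -1 ≤ a) (hx₀ : 0 < x₀)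
    (h₁ : a * x₀ + y₀ = 1) (h₂ : x₀ + y₀ / 6 = 1)
    (hx : 0 < x) (hy : 0 ≤ y) (hc₁ : a * x + y ≤ 1) (hc₂ : x + y / 6 ≤ 1) :
    objective x₀ y₀ ≤ objective x y := by
  have hval : objective x₀ y₀ = (1 + a) / x₀ := by
    rw [objective_eq hx₀.ne', div_eq_div_iff (by positivity) hx₀.ne']
    nlinarith
  rcases le_total x x₀ with hxx₀ | hx₀x
  · calc objective x₀ y₀ = (1 + a) / x₀ := hval
      _ ≤ (1 + a) / x := div_le_div_of_nonneg_left (by linarith) hx hxx₀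
      _ ≤ objective x y := one_add_div_le_objective hx hc₁
  · have hval' : objective x₀ y₀ = (7 * x₀ - 5) / x₀ ^ 2 := by
      rw [hval, div_eq_div_iff hx₀.ne' (by positivity)]
      nlinarith
    calc objective x₀ y₀ = (7 * x₀ - 5) / x₀ ^ 2 := hval'
      _ ≤ (7 * x - 5) / x ^ 2 := seven_mul_sub_five_div_sq_le hx₀ hx₀x (by linarith)
      _ ≤ objective x y := seven_mul_sub_five_div_sq_le_objective hx hc₂

end LCP

end

/-- arithmetic verification that LCP violates strategy-proofness.
Under truthful demands the constrained minimizer is (10/11, 6/11) giving agent 1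
cost 11/10; under the misreport the minimizer is (15/16, 3/8) and agent 1's true
completion time is 16/15 < 11/10. -/
theorem stmt_19 :
    -- truthful problem: minimizer (10/11, 6/11)
    (((10:ℝ)/11 > 0 ∧ (6:ℝ)/11 > 0 ∧
        (10:ℝ)/11/2 + 6/11 ≤ 1 ∧ (10:ℝ)/11 + (6/11)/6 ≤ 1) ∧
      (∀ x y : ℝ, 0 < x → 0 < y → x / 2 + y ≤ 1 → x + y / 6 ≤ 1 →
        (1 / ((10:ℝ)/11)) * (1 - ((6:ℝ)/11) / (10/11) + 1 / (10/11)) ≤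
          (1 / x) * (1 - y / x + 1 / x)) ∧
      1 / ((10:ℝ)/11) = 11/10) ∧
    -- misreported problem: minimizer (15/16, 3/8)
    (((15:ℝ)/16 > 0 ∧ (3:ℝ)/8 > 0 ∧
        2 * ((15:ℝ)/16) / 3 + 3/8 ≤ 1 ∧ (15:ℝ)/16 + (3/8)/6 ≤ 1) ∧
      (∀ x y : ℝ, 0 < x → 0 < y → 2 * x / 3 + y ≤ 1 → x + y / 6 ≤ 1 →
        (1 / ((15:ℝ)/16)) * (1 - ((3:ℝ)/8) / (15/16) + 1 / (15/16)) ≤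
          (1 / x) * (1 - y / x + 1 / x)) ∧
      1 / ((15:ℝ)/16) = 16/15) ∧
    (16:ℝ)/15 < 11/10 := by
  refine ⟨⟨by norm_num, ?truthful, by norm_num⟩, ⟨by norm_num, ?misreport, by norm_num⟩, by norm_num⟩
  case truthful =>
    intro x y hx hy h₁ h₂
    exact LCP.objective_le_of_tight (a := 1 / 2) (by norm_num) (by norm_num) (by norm_num)
      (by norm_num) hx hy.le (by linarith) h₂
  case misreport =>
    intro x y hx hy h₁ h₂
    exact LCP.objective_le_of_tight (a := 2 / 3) (by norm_num) (by norm_num) (by norm_num)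
      (by norm_num) hx hy.le (by linarith) h₂
end
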